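/- Let $R_\Theta := \mathbb{Z}[X_1,X_2]/(X_1^2X_2 + X_1X_2^2,\; X_1^2 + X_2^2 + X_1X_2)$ and consider the $\mathbb{Z}$-linear maps $d^0 : R_\Theta \to R_\Theta \oplus R_\Theta$, $d^0(r) = (X_1 r,\, X_2 r)$, and $d^1 : R_\Theta \oplus R_\Theta \to R_\Theta$, $d^1(a,b) = X_1 b - X_2 a$. Then $d^1 \circ d^0 = 0$, and the three homology groups $\ker d^0$, $\ker d^1/\operatorname{im} d^0$, and $R_\Theta/\operatorname{im} d^1$ are free abelian groups of ranks $1$, $2$, and $1$ respectively; in particular the total homology is a free abelian group of rank 4. -/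

import Mathlib

/-!
Modulo `x1² + x1x2 + x2²` the cubic relation becomes `-x2³`, so
`R_Θ ≅ (ℤ[y]/(y³))[x]/(x² + yx + y²)`, a tower of two monic extensions. Hence the monomials
`x1^i x2^j` (`i < 2`, `j < 3`) form a `ℤ`-basis of `R_Θ`: they span by reduction, and they are
independent because their images in the tower are the products of the two power bases. In these
coordinates multiplication by `x1` and `x2` is given by explicit integer matrices, and the homology
of the Koszul complex can be read off: `ker d⁰ = ℤ·x1x2²`, `im d¹` is the span of the non-constant
monomials, and `ker d¹ / im d⁰` is free on the classes of `(x2², 0)` and `(-(x1 + x2), x1)`.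
-/

open MvPolynomial

noncomputable section

/-- The defining ideal of the graph ring of the planar theta graph. -/
abbrev thetaIdeal : Ideal (MvPolynomial (Fin 2) ℤ) :=
  Ideal.span {X 0 ^ 2 * X 1 + X 0 * X 1 ^ 2, X 0 ^ 2 + X 1 ^ 2 + X 0 * X 1}

/-- The graph ring `R_Θ = ℤ[X₁,X₂]/(X₁²X₂ + X₁X₂², X₁² + X₂² + X₁X₂)` of the
planar theta graph. -/
abbrev RTheta := MvPolynomial (Fin 2) ℤ ⧸ thetaIdeal

/-- The residue class of `X₁` in `R_Θ`. -/
abbrev RTheta.x1 : RTheta := Ideal.Quotient.mk thetaIdeal (X 0)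

/-- The residue class of `X₂` in `R_Θ`. -/
abbrev RTheta.x2 : RTheta := Ideal.Quotient.mk thetaIdeal (X 1)

/-- The first Koszul differential `d⁰(r) = (X₁ r, X₂ r)`. -/
def kosZeroZ : RTheta →ₗ[ℤ] RTheta × RTheta :=
  (LinearMap.mulLeft ℤ RTheta.x1).prod (LinearMap.mulLeft ℤ RTheta.x2)

/-- The second Koszul differential `d¹(a, b) = X₁ b - X₂ a`. -/
def kosOneZ : RTheta × RTheta →ₗ[ℤ] RTheta :=
  (LinearMap.mulLeft ℤ RTheta.x1).comp (LinearMap.snd ℤ RTheta RTheta) -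
    (LinearMap.mulLeft ℤ RTheta.x2).comp (LinearMap.fst ℤ RTheta RTheta)

open Polynomial in
theorem AdjoinRoot.linearIndependent_root_pow {R : Type*} [CommRing R] {g : R[X]} (hg : g.Monic)
    {n : ℕ} (hn : g.natDegree = n) :
    LinearIndependent R (fun i : Fin n => root g ^ (i : ℕ)) := by
  subst hn
  have h := (powerBasis' hg).basis.linearIndependent
  rw [PowerBasis.coe_basis] at h
  exact h

theorem Module.Basis.coord_surjective {ι R M : Type*} [Semiring R] [AddCommMonoid M] [Module R M]
    (b : Module.Basis ι R M) (i : ι) : Function.Surjective (b.coord i) :=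
  fun r => ⟨r • b i, by simp⟩

namespace RTheta

abbrev TruncPoly := AdjoinRoot (Polynomial.X ^ 3 : Polynomial ℤ)

instance : Nontrivial TruncPoly := AdjoinRoot.nontrivial _ (by simp)

def TruncPoly.y : TruncPoly := AdjoinRoot.root _

lemma TruncPoly.y_pow_three : TruncPoly.y ^ 3 = 0 := by
  rw [TruncPoly.y, ← AdjoinRoot.mk_X, ← map_pow, AdjoinRoot.mk_self]

def quadratic : Polynomial TruncPoly :=
  Polynomial.X ^ 2 + Polynomial.C TruncPoly.y * Polynomial.X + Polynomial.C (TruncPoly.y ^ 2)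

lemma quadratic_monic : quadratic.Monic := by
  unfold quadratic; monicity!

lemma quadratic_natDegree : quadratic.natDegree = 2 := by
  unfold quadratic; compute_degree!

abbrev Model := AdjoinRoot quadratic

namespace Model

abbrev x : Model := AdjoinRoot.root quadratic

abbrev y : Model := AdjoinRoot.of quadratic TruncPoly.y

lemma x_sq_add_y_mul_x_add_y_sq : x ^ 2 + y * x + y ^ 2 = 0 := by
  have h : (Polynomial.X ^ 2 + Polynomial.C TruncPoly.y * Polynomial.X +
      Polynomial.C (TruncPoly.y ^ 2)).eval₂ (AdjoinRoot.of quadratic) x = 0 :=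
    AdjoinRoot.eval₂_root quadratic
  simpa [Polynomial.eval₂_pow] using h

lemma y_pow_three : y ^ 3 = 0 := by
  rw [← map_pow, TruncPoly.y_pow_three, map_zero]

lemma linearIndependent_y_pow_smul_x_pow :
    LinearIndependent ℤ (fun p : Fin 3 × Fin 2 => TruncPoly.y ^ (p.1 : ℕ) • x ^ (p.2 : ℕ)) := by
  -- elaborating against the goal would unify two `ℤ`-module structures on a quotient: very slow
  have h := linearIndependent_smul (R := ℤ)
    (AdjoinRoot.linearIndependent_root_pow (Polynomial.monic_X_pow 3)
      (Polynomial.natDegree_X_pow 3))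
    (AdjoinRoot.linearIndependent_root_pow quadratic_monic quadratic_natDegree)
  exact h

end Model

lemma x1_sq_add_x2_sq_add_x1_mul_x2 : x1 ^ 2 + x2 ^ 2 + x1 * x2 = 0 := by
  simp only [← map_pow, ← map_mul, ← map_add, Ideal.Quotient.eq_zero_iff_mem]
  exact Ideal.subset_span (by simp)

lemma x1_sq_mul_x2_add_x1_mul_x2_sq : x1 ^ 2 * x2 + x1 * x2 ^ 2 = 0 := by
  simp only [← map_pow, ← map_mul, ← map_add, Ideal.Quotient.eq_zero_iff_mem]
  exact Ideal.subset_span (by simp)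

lemma x2_pow_three : x2 ^ 3 = 0 := by
  linear_combination x2 * x1_sq_add_x2_sq_add_x1_mul_x2 - x1_sq_mul_x2_add_x1_mul_x2_sq

def toModel : RTheta →+* Model :=
  Ideal.Quotient.lift thetaIdeal (MvPolynomial.eval₂Hom (Int.castRingHom _) ![Model.x, Model.y])
    fun p hp => by
      refine RingHom.mem_ker.1 ((Ideal.span_le.2 ?_ : thetaIdeal ≤ RingHom.ker _) hp)
      rintro _ (rfl | rfl) <;>
        simp only [SetLike.mem_coe, RingHom.mem_ker, coe_eval₂Hom, eval₂_add, eval₂_mul, eval₂_pow,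
          eval₂_X, Matrix.cons_val_zero, Matrix.cons_val_one, Matrix.cons_val_fin_one]
      · linear_combination Model.y * Model.x_sq_add_y_mul_x_add_y_sq - Model.y_pow_three
      · linear_combination Model.x_sq_add_y_mul_x_add_y_sq

@[simp] lemma toModel_x1 : toModel x1 = Model.x := by
  rw [toModel, x1, Ideal.Quotient.lift_mk]; simp

@[simp] lemma toModel_x2 : toModel x2 = Model.y := by
  rw [toModel, x2, Ideal.Quotient.lift_mk]; simp

def standardMonomial : Fin 6 → RTheta := ![1, x1, x2, x1 * x2, x2 ^ 2, x1 * x2 ^ 2]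

/-- Reduction with `x1² = -x1x2 - x2²`, `x1²x2 = -x1x2²` and `x1²x2² = 0`. -/
def mulX1Coords (v : Fin 6 → ℤ) : Fin 6 → ℤ := ![0, v 0, 0, v 2 - v 1, -v 1, v 4 - v 3]

def mulX2Coords (v : Fin 6 → ℤ) : Fin 6 → ℤ := ![0, 0, v 0, v 1, v 2, v 3]

lemma x1_mul_sum_standardMonomial (v : Fin 6 → ℤ) :
    x1 * ∑ i, v i • standardMonomial i = ∑ i, mulX1Coords v i • standardMonomial i := by
  simp only [Fin.sum_univ_six, standardMonomial, mulX1Coords, zsmul_eq_mul, Matrix.cons_val,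
    Int.cast_zero, Int.cast_sub, Int.cast_neg]
  linear_combination (v 1 : RTheta) * x1_sq_add_x2_sq_add_x1_mul_x2 +
    (v 3 : RTheta) * x1_sq_mul_x2_add_x1_mul_x2_sq +
    (v 5 : RTheta) * ((x1 + x2) * x1_sq_mul_x2_add_x1_mul_x2_sq -
      x1 * x2 * x1_sq_add_x2_sq_add_x1_mul_x2)

lemma x2_mul_sum_standardMonomial (v : Fin 6 → ℤ) :
    x2 * ∑ i, v i • standardMonomial i = ∑ i, mulX2Coords v i • standardMonomial i := by
  simp only [Fin.sum_univ_six, standardMonomial, mulX2Coords, zsmul_eq_mul, Matrix.cons_val,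
    Int.cast_zero]
  linear_combination ((v 4 : RTheta) + v 5 * x1) * x2_pow_three

lemma span_standardMonomial : Submodule.span ℤ (Set.range standardMonomial) = ⊤ := by
  refine Submodule.eq_top_iff'.2 fun r => ?_
  rw [Submodule.mem_span_range_iff_exists_fun]
  obtain ⟨p, rfl⟩ := Ideal.Quotient.mk_surjective r
  induction p using MvPolynomial.induction_on with
  | C a =>
    refine ⟨Pi.single 0 a, ?_⟩
    simp [standardMonomial, Pi.single_apply]
  | add p q hp hq =>
    obtain ⟨v, hv⟩ := hp
    obtain ⟨w, hw⟩ := hq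
    refine ⟨v + w, ?_⟩
    rw [map_add, ← hv, ← hw]
    simp only [Pi.add_apply, add_smul, Finset.sum_add_distrib]
  | mul_X p i hp =>
    obtain ⟨v, hv⟩ := hp
    rw [map_mul, mul_comm, ← hv]
    fin_cases i
    · exact ⟨mulX1Coords v, (x1_mul_sum_standardMonomial v).symm⟩
    · exact ⟨mulX2Coords v, (x2_mul_sum_standardMonomial v).symm⟩

lemma linearIndependent_standardMonomial : LinearIndependent ℤ standardMonomial := by
  refine .of_comp toModel.toAddMonoidHom.toIntLinearMap ?_
  have h : toModel.toAddMonoidHom.toIntLinearMap ∘ standardMonomial =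
      (fun p : Fin 3 × Fin 2 => TruncPoly.y ^ (p.1 : ℕ) • Model.x ^ (p.2 : ℕ)) ∘
        finProdFinEquiv.symm := by
    funext k
    fin_cases k <;>
      simp [standardMonomial, Algebra.smul_def, finProdFinEquiv, Fin.divNat, Fin.modNat] <;> ring
  rw [h]
  exact Model.linearIndependent_y_pow_smul_x_pow.comp _ finProdFinEquiv.symm.injective

def standardBasis : Module.Basis (Fin 6) ℤ RTheta :=
  .mk linearIndependent_standardMonomial span_standardMonomial.ge

instance : Module.Free ℤ RTheta := .of_basis standardBasis

def coords : RTheta ≃ₗ[ℤ] (Fin 6 → ℤ) := standardBasis.equivFun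

lemma coords_symm_apply (v : Fin 6 → ℤ) : coords.symm v = ∑ i, v i • standardMonomial i := by
  simp [coords, standardBasis]

lemma eq_sum_coords (r : RTheta) : r = ∑ i, coords r i • standardMonomial i := by
  rw [← coords_symm_apply, LinearEquiv.symm_apply_apply]

lemma standardBasis_apply (i : Fin 6) : standardBasis i = standardMonomial i :=
  Module.Basis.mk_apply _ _ i

lemma coords_standardMonomial (i : Fin 6) : coords (standardMonomial i) = Pi.single i 1 := by
  rw [← standardBasis_apply, coords, Module.Basis.equivFun_apply, Module.Basis.repr_self,
    Finsupp.single_eq_pi_single]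

lemma standardBasis_coord_apply (i : Fin 6) (r : RTheta) : standardBasis.coord i r = coords r i :=
  rfl

lemma coords_x1_mul (r : RTheta) : coords (x1 * r) = mulX1Coords (coords r) := by
  obtain ⟨v, rfl⟩ := coords.symm.surjective r
  rw [LinearEquiv.apply_symm_apply, coords_symm_apply, x1_mul_sum_standardMonomial,
    ← coords_symm_apply, LinearEquiv.apply_symm_apply]

lemma coords_x2_mul (r : RTheta) : coords (x2 * r) = mulX2Coords (coords r) := by
  obtain ⟨v, rfl⟩ := coords.symm.surjective r
  rw [LinearEquiv.apply_symm_apply, coords_symm_apply, x2_mul_sum_standardMonomial,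
    ← coords_symm_apply, LinearEquiv.apply_symm_apply]

lemma x1_mul_x2_sq_ne_zero : x1 * x2 ^ 2 ≠ 0 := by
  simpa [standardBasis_apply, standardMonomial] using standardBasis.ne_zero 5

end RTheta

open RTheta

@[simp] lemma kosZeroZ_apply (r : RTheta) : kosZeroZ r = (x1 * r, x2 * r) := rfl

@[simp] lemma kosOneZ_apply (p : RTheta × RTheta) : kosOneZ p = x1 * p.2 - x2 * p.1 := rfl

lemma kosOneZ_comp_kosZeroZ : kosOneZ.comp kosZeroZ = 0 := by
  refine LinearMap.ext fun r => ?_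
  simp only [LinearMap.comp_apply, kosZeroZ_apply, kosOneZ_apply, LinearMap.zero_apply]
  ring

lemma ker_kosZeroZ : LinearMap.ker kosZeroZ = ℤ ∙ (x1 * x2 ^ 2) := by
  ext r
  rw [LinearMap.mem_ker, Submodule.mem_span_singleton, kosZeroZ_apply, Prod.mk_eq_zero]
  constructor
  · rintro ⟨hx1, hx2⟩
    have c1 : mulX1Coords (coords r) = 0 := by rw [← coords_x1_mul, hx1, map_zero]
    have c2 : mulX2Coords (coords r) = 0 := by rw [← coords_x2_mul, hx2, map_zero]
    have h0 : coords r 0 = 0 := congrFun c2 2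
    have h1 : coords r 1 = 0 := congrFun c2 3
    have h2 : coords r 2 = 0 := congrFun c2 4
    have h3 : coords r 3 = 0 := congrFun c2 5
    have h43 : coords r 4 - coords r 3 = 0 := congrFun c1 5
    have h4 : coords r 4 = 0 := by omega
    refine ⟨coords r 5, ?_⟩
    conv_rhs => rw [eq_sum_coords r]
    simp [Fin.sum_univ_six, standardMonomial, h0, h1, h2, h3, h4]
  · rintro ⟨a, rfl⟩
    constructor
    · rw [mul_smul_comm]
      exact smul_eq_zero_of_right _ (by
        linear_combination x2 * x1_sq_mul_x2_add_x1_mul_x2_sq - x1 * x2_pow_three)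
    · rw [mul_smul_comm]
      exact smul_eq_zero_of_right _ (by linear_combination x1 * x2_pow_three)

lemma range_kosOneZ : LinearMap.range kosOneZ = LinearMap.ker (standardBasis.coord 0) := by
  ext r
  rw [LinearMap.mem_ker, standardBasis_coord_apply]
  constructor
  · rintro ⟨⟨a, b⟩, rfl⟩
    simp [coords_x1_mul, coords_x2_mul, mulX1Coords, mulX2Coords]
  · intro h0
    refine ⟨(-(coords r 2 + coords r 4 * x2),
      coords r 1 + coords r 3 * x2 + coords r 5 * x2 ^ 2), ?_⟩
    conv_rhs => rw [eq_sum_coords r]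
    simp only [kosOneZ_apply, Fin.sum_univ_six, standardMonomial, zsmul_eq_mul, h0, Matrix.cons_val,
      Int.cast_zero]
    ring

/-- Vanishes on the boundaries `(x1 s, x2 s)` and sends the cycles `(x2², 0)` and
`(-(x1 + x2), x1)` to the standard basis vectors. -/
def cycleCoords : RTheta × RTheta →ₗ[ℤ] Fin 2 → ℤ :=
  LinearMap.pi ![(standardBasis.coord 4).comp (LinearMap.fst ℤ RTheta RTheta) +
    (standardBasis.coord 3).comp (LinearMap.snd ℤ RTheta RTheta),
    (standardBasis.coord 1).comp (LinearMap.snd ℤ RTheta RTheta)]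

lemma cycleCoords_apply (a b : RTheta) :
    cycleCoords (a, b) = ![coords a 4 + coords b 3, coords b 1] := by
  ext j; fin_cases j <;> rfl

lemma mem_range_kosZeroZ_iff {a b : RTheta} (hab : (a, b) ∈ LinearMap.ker kosOneZ) :
    (a, b) ∈ LinearMap.range kosZeroZ ↔ cycleCoords (a, b) = 0 := by
  rw [LinearMap.mem_ker, kosOneZ_apply, sub_eq_zero] at hab
  have hc : mulX1Coords (coords b) = mulX2Coords (coords a) := by
    rw [← coords_x1_mul, ← coords_x2_mul, hab]
  have hb0 : coords b 0 = 0 := congrFun hc 1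
  have ha0 : 0 = coords a 0 := congrFun hc 2
  have h1 : coords b 2 - coords b 1 = coords a 1 := congrFun hc 3
  have h2 : -coords b 1 = coords a 2 := congrFun hc 4
  have h3 : coords b 4 - coords b 3 = coords a 3 := congrFun hc 5
  rw [cycleCoords_apply]
  constructor
  · rintro ⟨s, hs⟩
    simp only [kosZeroZ_apply, Prod.mk.injEq] at hs
    obtain ⟨rfl, rfl⟩ := hs
    simp [coords_x1_mul, coords_x2_mul, mulX1Coords, mulX2Coords]
  · intro h
    have h4 : coords a 4 + coords b 3 = 0 := congrFun h 0
    have hb1 : coords b 1 = 0 := congrFun h 1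
    -- `x2 * s = b` fixes `s 0, …, s 3`, then `x1 * s = a` fixes `s 4`; both kill `s 5`
    refine ⟨coords.symm ![coords b 2, coords b 3, coords b 4, coords b 5,
      coords a 5 + coords b 5, 0], ?_⟩
    simp only [kosZeroZ_apply, Prod.mk.injEq]
    constructor
    · apply coords.injective
      rw [coords_x1_mul, LinearEquiv.apply_symm_apply]
      ext j; fin_cases j <;> simp [mulX1Coords] <;> omega
    · apply coords.injective
      rw [coords_x2_mul, LinearEquiv.apply_symm_apply]
      ext j; fin_cases j <;> simp [mulX2Coords] <;> omega

lemma comap_range_kosZeroZ :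
    (LinearMap.range kosZeroZ).comap (LinearMap.ker kosOneZ).subtype =
      LinearMap.ker (cycleCoords ∘ₗ (LinearMap.ker kosOneZ).subtype) := by
  ext ⟨⟨a, b⟩, hab⟩
  exact mem_range_kosZeroZ_iff hab

lemma x2_sq_mem_ker_kosOneZ : ((x2 ^ 2, 0) : RTheta × RTheta) ∈ LinearMap.ker kosOneZ := by
  rw [LinearMap.mem_ker, kosOneZ_apply]
  linear_combination -x2_pow_three

lemma neg_x1_add_x2_mem_ker_kosOneZ :
    ((-(x1 + x2), x1) : RTheta × RTheta) ∈ LinearMap.ker kosOneZ := by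
  rw [LinearMap.mem_ker, kosOneZ_apply]
  linear_combination x1_sq_add_x2_sq_add_x1_mul_x2

lemma cycleCoords_comp_subtype_surjective :
    Function.Surjective (cycleCoords ∘ₗ (LinearMap.ker kosOneZ).subtype) := by
  intro c
  refine ⟨c 0 • ⟨_, x2_sq_mem_ker_kosOneZ⟩ + c 1 • ⟨_, neg_x1_add_x2_mem_ker_kosOneZ⟩, ?_⟩
  have e1 : coords x1 = Pi.single 1 1 := coords_standardMonomial 1
  have e2 : coords x2 = Pi.single 2 1 := coords_standardMonomial 2
  have e4 : coords (x2 ^ 2) = Pi.single 4 1 := coords_standardMonomial 4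
  ext j
  fin_cases j <;> simp [-zsmul_eq_mul, cycleCoords_apply, e1, e2, e4]

def basisKerKosZeroZ : Module.Basis (Fin 1) ℤ (LinearMap.ker kosZeroZ) :=
  ((Module.Basis.singleton (Fin 1) ℤ).map
    (LinearEquiv.toSpanNonzeroSingleton ℤ RTheta _ x1_mul_x2_sq_ne_zero)).map
    (LinearEquiv.ofEq _ _ ker_kosZeroZ).symm

def basisKosHomology : Module.Basis (Fin 2) ℤ (LinearMap.ker kosOneZ ⧸
    (LinearMap.range kosZeroZ).comap (LinearMap.ker kosOneZ).subtype) :=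
  .ofEquivFun ((Submodule.quotEquivOfEq _ _ comap_range_kosZeroZ).trans
    (LinearMap.quotKerEquivOfSurjective _ cycleCoords_comp_subtype_surjective))

def basisCokerKosOneZ : Module.Basis (Fin 1) ℤ (RTheta ⧸ LinearMap.range kosOneZ) :=
  (Module.Basis.singleton (Fin 1) ℤ).map ((Submodule.quotEquivOfEq _ _ range_kosOneZ).trans
    ((standardBasis.coord 0).quotKerEquivOfSurjective (standardBasis.coord_surjective 0))).symm

/-- The Koszul complex `R_Θ → R_Θ ⊕ R_Θ → R_Θ` of `(X₁, X₂)` is a complex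
(`d¹ ∘ d⁰ = 0`) whose homology groups `ker d⁰`, `ker d¹ / im d⁰` and
`R_Θ / im d¹` are free abelian groups of ranks `1`, `2` and `1` respectively;
in particular the total homology is free abelian of rank `4`. -/
theorem RTheta_koszul_homology_free :
    kosOneZ.comp kosZeroZ = 0 ∧
    Nonempty (Module.Basis (Fin 1) ℤ ↥(LinearMap.ker kosZeroZ)) ∧
    Nonempty (Module.Basis (Fin 2) ℤ
      (↥(LinearMap.ker kosOneZ) ⧸
        Submodule.comap (LinearMap.ker kosOneZ).subtype (LinearMap.range kosZeroZ))) ∧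
    Nonempty (Module.Basis (Fin 1) ℤ (RTheta ⧸ LinearMap.range kosOneZ)) ∧
    Nonempty (Module.Basis (Fin 4) ℤ
      (↥(LinearMap.ker kosZeroZ) ×
        (↥(LinearMap.ker kosOneZ) ⧸
          Submodule.comap (LinearMap.ker kosOneZ).subtype (LinearMap.range kosZeroZ)) ×
        (RTheta ⧸ LinearMap.range kosOneZ))) :=
  ⟨kosOneZ_comp_kosZeroZ, ⟨basisKerKosZeroZ⟩, ⟨basisKosHomology⟩, ⟨basisCokerKosOneZ⟩,
    ⟨(basisKerKosZeroZ.prod (basisKosHomology.prod basisCokerKosOneZ)).reindex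
      ((Equiv.sumCongr (Equiv.refl _) finSumFinEquiv).trans finSumFinEquiv)⟩⟩

end
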